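/- The only c-conjugate tuple of the form (f, f, ..., f) (N copies) is f = (N-1)·q where q(x) = ½‖x‖²; that is, if f: H → ℝ ∪ {+∞} is proper and satisfies f(x) = sup_{x₂,...,x_N} [ Σ_{1≤i<j≤N}⟨x_i, x_j⟩ - Σ_{i=2}^N f(x_i) ] (with x₁ = x) for all x ∈ H, then f = (N-1)q. -/

import Mathlib

/-!
On the diagonal the conjugacy relation reads `N(N-1) q(b) = c(b, …, b) ≤ N f(b)`, so `f ≥ (N-1) q`
(in `EReal` the same inequality also excludes `f b = ⊥`, as its left side would then be `⊤`).
Conversely, summing `⟪x, y⟫ ≤ q x + q y` over all pairs gives `c(x) ≤ (N-1) ∑ᵢ q(xᵢ)`; inserting the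
lower bound for `f(x₂), …, f(x_N)` into the supremum gives `f ≤ (N-1) q`.
-/

open scoped RealInnerProductSpace BigOperators

noncomputable section

variable {H : Type*} [NormedAddCommGroup H] [InnerProductSpace ℝ H] [CompleteSpace H]

/-- The multi-marginal cost `c(x₁,...,x_N) = ∑_{i<j} ⟪x_i, x_j⟫`. -/
def cost {N : ℕ} (x : Fin N → H) : ℝ :=
  ∑ i : Fin N, ∑ j : Fin N, if i < j then ⟪x i, x j⟫ else 0

/-- `q(x) = ½‖x‖²`. -/
def q (x : H) : ℝ := (1 / 2) * ‖x‖ ^ 2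

open Finset

theorem EReal.coe_finset_sum {ι : Type*} (s : Finset ι) (g : ι → ℝ) :
    ((∑ i ∈ s, g i : ℝ) : EReal) = ∑ i ∈ s, (g i : EReal) :=
  map_sum (⟨⟨Real.toEReal, EReal.coe_zero⟩, EReal.coe_add⟩ : ℝ →+ EReal) g s

theorem EReal.coe_div_le_of_sub_nsmul_le {c : ℝ} {n : ℕ} (hn : n ≠ 0) {y : EReal}
    (h : (c : EReal) - n • y ≤ y) : ((c / (n + 1) : ℝ) : EReal) ≤ y := by
  induction y with
  | bot =>
    rw [← Nat.succ_pred_eq_of_ne_zero hn, succ_nsmul, EReal.add_bot, EReal.coe_sub_bot] at h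
    exact absurd h (by simp)
  | top => exact le_top
  | coe y =>
    rw [← EReal.coe_nsmul, ← EReal.coe_sub, EReal.coe_le_coe_iff, _root_.nsmul_eq_mul] at h
    rw [EReal.coe_le_coe_iff, div_le_iff₀ (by positivity)]
    linarith

theorem sum_sum_ite_lt_add {ι R : Type*} [Fintype ι] [LinearOrder ι] [CommRing R] (g : ι → R) :
    ∑ i, ∑ j, (if i < j then g i + g j else 0) = ((Fintype.card ι : R) - 1) * ∑ i, g i := by
  have hpair (i j : ι) :
      (if i < j then g i else 0) + (if j < i then g i else 0) = if j = i then 0 else g i := by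
    rcases lt_trichotomy i j with h | rfl | h
    · simp [h, h.not_gt, h.ne']
    · simp
    · simp [h, h.not_gt, h.ne]
  simp_rw [ite_add_zero, sum_add_distrib]
  rw [sum_comm (f := fun i j => if i < j then g j else 0), ← sum_add_distrib, mul_sum]
  refine sum_congr rfl fun i _ => ?_
  rw [← sum_add_distrib]
  simp_rw [hpair]
  rw [sum_ite, sum_const_zero, zero_add, sum_const, filter_ne', card_erase_of_mem (mem_univ _),
    card_univ, nsmul_eq_mul, Nat.cast_pred (Fintype.card_pos_iff.2 ⟨i⟩)]

section
variable {E : Type*} [NormedAddCommGroup E] [InnerProductSpace ℝ E]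

theorem real_inner_le_q_add_q (x y : E) : ⟪x, y⟫ ≤ q x + q y := by
  have := norm_sub_sq_real x y
  unfold q
  nlinarith [sq_nonneg ‖x - y‖]

theorem cost_le_sum_q {N : ℕ} (x : Fin N → E) : cost x ≤ ((N : ℝ) - 1) * ∑ i, q (x i) := by
  have hcount := sum_sum_ite_lt_add fun i => q (x i)
  rw [Fintype.card_fin] at hcount
  rw [← hcount]
  refine sum_le_sum fun i _ => sum_le_sum fun j _ => ?_
  split_ifs
  · exact real_inner_le_q_add_q _ _
  · rfl

theorem cost_const {N : ℕ} (a : E) : cost (fun _ : Fin N => a) = N * ((N : ℝ) - 1) * q a := by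
  have hself : ⟪a, a⟫ = q a + q a := by
    rw [real_inner_self_eq_norm_sq, q]; ring
  simp_rw [cost, hself]
  rw [sum_sum_ite_lt_add (fun _ : Fin N => q a), sum_const, card_univ, nsmul_eq_mul,
    Fintype.card_fin]
  ring

end

/-- The only `c`-conjugate tuple of the form `(f,...,f)` is `f = (N-1)·q`. -/
theorem self_c_conjugate_is_multiple_of_q {N : ℕ} (hN : 2 ≤ N) (f : H → EReal)
    (hconj : ∀ a : H,
      f a = ⨆ x : {x : Fin N → H // x ⟨0, by omega⟩ = a},
        ((cost (x : Fin N → H) : ℝ) : EReal)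
          - ∑ i ∈ Finset.univ.erase (⟨0, by omega⟩ : Fin N), f ((x : Fin N → H) i)) :
    ∀ a : H, f a = ((((N : ℝ) - 1) * q a : ℝ) : EReal) := by
  set i₀ : Fin N := ⟨0, by omega⟩
  have hcard : #(univ.erase i₀) = N - 1 := by simp
  have hlow (b : H) : ((((N : ℝ) - 1) * q b : ℝ) : EReal) ≤ f b := by
    have hdiag : ((N * ((N : ℝ) - 1) * q b : ℝ) : EReal) - (N - 1) • f b ≤ f b := by
      have := (hconj b).symm ▸ le_iSup _ (⟨fun _ => b, rfl⟩ : {x : Fin N → H // x i₀ = b})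
      simpa [cost_const, sum_const, hcard] using this
    convert EReal.coe_div_le_of_sub_nsmul_le (by omega) hdiag using 2
    have hN0 : (N : ℝ) ≠ 0 := by positivity
    rw [Nat.cast_pred (by omega), sub_add_cancel]
    field_simp
  intro a
  refine le_antisymm ?_ (hlow a)
  rw [hconj a]
  refine iSup_le fun ⟨x, hx⟩ => ?_
  calc ((cost x : ℝ) : EReal) - ∑ i ∈ univ.erase i₀, f (x i)
      ≤ ((cost x : ℝ) : EReal) - ∑ i ∈ univ.erase i₀, ((((N : ℝ) - 1) * q (x i) : ℝ) : EReal) :=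
        EReal.sub_le_sub le_rfl (sum_le_sum fun i _ => hlow (x i))
    _ ≤ ((((N : ℝ) - 1) * q a : ℝ) : EReal) := by
        rw [← EReal.coe_finset_sum, ← EReal.coe_sub, EReal.coe_le_coe_iff, ← hx]
        linarith [cost_le_sum_q x, mul_sum univ (fun i => q (x i)) ((N : ℝ) - 1),
          add_sum_erase univ (fun i => ((N : ℝ) - 1) * q (x i)) (mem_univ i₀)]
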